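/- In a monotonous quiver, a vertex X is phylogenetic if and only if X is normal and h(X) < ∞. -/

import Mathlib

universe u
variable {V : Type u} [Quiver V]

/-- An evolution of length `m` with vertex sequence `A 0, A 1, ..., A m`:
for each `k < m` there is an edge from `A (k+1)` to `A k`
(the paper's evolution `A 0 ← A 1 ← ⋯ ← A m`). -/
def IsEvol (A : ℕ → V) (m : ℕ) : Prop := ∀ k < m, Nonempty (A (k + 1) ⟶ A k)

/-- `Anc X Y` : `X` is an ancestor of `Y`, i.e. there is an evolution from `X` to `Y`. -/
def Anc (X Y : V) : Prop := ∃ (m : ℕ) (A : ℕ → V), IsEvol A m ∧ A 0 = X ∧ A m = Y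

/-- `X` and `Y` are isotypic. -/
def Isotypic (X Y : V) : Prop := Anc X Y ∧ Anc Y X

/-- A vertex is primitive if every ancestor of it is isotypic to it. -/
def Primitive (X : V) : Prop := ∀ B : V, Anc B X → Anc X B

/-- A full evolution for `X` : an evolution from a primitive vertex to `X`. -/
def IsFullEvol (A : ℕ → V) (m : ℕ) (X : V) : Prop :=
  IsEvol A m ∧ Primitive (A 0) ∧ A m = X

/-- The height of a vertex: the least length of a full evolution for it (`⊤` if none). -/
noncomputable def height (X : V) : ℕ∞ :=
  sInf {n : ℕ∞ | ∃ m : ℕ, n = (m : ℕ∞) ∧ ∃ A : ℕ → V, IsFullEvol A m X}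

/-- `A` is a critical ancestor of `B`. -/
def CritAnc (A B : V) : Prop :=
  height A < ⊤ ∧ ∃ (m : ℕ) (E : ℕ → V), 0 < m ∧ IsEvol E m ∧ E 0 = A ∧ E m = B ∧
    height (E 1) = height A + 1

/-- A vertex is normal if any two of its critical ancestors of equal height are isotypic. -/
def NormalVtx (B : V) : Prop :=
  ∀ A A' : V, CritAnc A B → CritAnc A' B → height A = height A' → Isotypic A A'

/-- The evolution `(A, m)` embeds in the evolution `(B, n)`. -/
def Embeds (A : ℕ → V) (m : ℕ) (B : ℕ → V) (n : ℕ) : Prop :=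
  m ≤ n ∧ ∃ r : ℕ → ℕ, (∀ k < m, r k < r (k + 1)) ∧ r m ≤ n ∧
    ∀ k ≤ m, Isotypic (A k) (B (r k))

/-- A universal evolution for `X`: a full evolution for `X` embedding in every
full evolution for `X`. -/
def IsUniversalEvol (A : ℕ → V) (m : ℕ) (X : V) : Prop :=
  IsFullEvol A m X ∧ ∀ (B : ℕ → V) (n : ℕ), IsFullEvol B n X → Embeds A m B n

/-- A vertex is phylogenetic if it admits a universal evolution. -/
def Phylogenetic (X : V) : Prop := ∃ (A : ℕ → V) (m : ℕ), IsUniversalEvol A m X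

/-- A quiver is monotonous if `h(A) ≥ h(B)` for every edge `A → B`. -/
def Monotonous (V : Type u) [Quiver V] : Prop :=
  ∀ A B : V, Nonempty (A ⟶ B) → height B ≤ height A

/-- A vertex `A` is regular if for every descendant `B` of `A` with `h(B) = h(A)`
there is an edge `B → A`. -/
def Regular (A : V) : Prop :=
  ∀ B : V, Anc A B → height B = height A → Nonempty (B ⟶ A)

/-- The clade of a vertex `A`: the full subquiver of descendants of `A`. -/
abbrev Clade (A : V) : Type u := {B : V // Anc A B}

instance (A : V) : Quiver (Clade A) := ⟨fun X Y => X.val ⟶ Y.val⟩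

/-! Heights grow by at most one along an edge, so a full evolution `B` for `X`, read from its
primitive end, crosses every level `j < h(X)` by an edge `B (r + 1) → B r` from height `j + 1`
down to height `j`; such a `B r` is a critical ancestor of `X`. If `X` is normal, `B r` is thus
isotypic to the `j`-th vertex of a short evolution for `X`, which therefore embeds in `B`.

Conversely, a universal evolution `U` for `X` embeds in a short one, so it is short itself.
Given a critical ancestor `A ← E 1 ← ⋯ ← X` of height `j`, prepend a short evolution for `A`: in
a monotonous quiver the resulting full evolution for `X` has exactly one vertex of height `j`,
namely `A`, and the embedding of `U` must send `U j` there. -/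

def splice {α : Type*} (A B : ℕ → α) (m : ℕ) : ℕ → α :=
  fun k => if k ≤ m then A k else B (k - m)

theorem splice_of_le {α : Type*} {A B : ℕ → α} {m k : ℕ} (h : k ≤ m) :
    splice A B m k = A k :=
  if_pos h

theorem splice_of_ge {α : Type*} {A B : ℕ → α} {m k : ℕ} (hAB : A m = B 0) (h : m ≤ k) :
    splice A B m k = B (k - m) := by
  rcases h.eq_or_lt with rfl | h
  · rw [splice_of_le le_rfl, hAB, Nat.sub_self]
  · exact if_neg h.not_ge

theorem IsEvol.append {A B : ℕ → V} {m n : ℕ} (hA : IsEvol A m) (hB : IsEvol B n)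
    (hAB : A m = B 0) : IsEvol (splice A B m) (m + n) := by
  intro k hk
  rcases lt_or_ge k m with hkm | hkm
  · rw [splice_of_le hkm.le, splice_of_le hkm]
    exact hA k hkm
  · rw [splice_of_ge hAB hkm, splice_of_ge hAB (hkm.trans k.le_succ),
      show k + 1 - m = k - m + 1 by omega]
    exact hB (k - m) (by omega)

theorem IsEvol.shift {A : ℕ → V} {m : ℕ} (hA : IsEvol A m) {j ℓ : ℕ} (h : j + ℓ ≤ m) :
    IsEvol (fun i => A (j + i)) ℓ := fun k hk => hA (j + k) (by omega)

theorem IsEvol.of_le {A : ℕ → V} {m n : ℕ} (hA : IsEvol A m) (h : n ≤ m) : IsEvol A n :=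
  fun k hk => hA k (hk.trans_le h)

theorem IsEvol.anc {A : ℕ → V} {m : ℕ} (hA : IsEvol A m) {i k : ℕ} (hik : i ≤ k)
    (hk : k ≤ m) : Anc (A i) (A k) :=
  ⟨k - i, fun t => A (i + t), hA.shift (by omega), rfl, by simp only [Nat.add_sub_cancel' hik]⟩

theorem Anc.refl (X : V) : Anc X X :=
  ⟨0, fun _ => X, fun _ hk => absurd hk (Nat.not_lt_zero _), rfl, rfl⟩

theorem Anc.trans {X Y Z : V} (h₁ : Anc X Y) (h₂ : Anc Y Z) : Anc X Z := by
  obtain ⟨m, A, hA, rfl, hAm⟩ := h₁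
  obtain ⟨n, B, hB, hB0, rfl⟩ := h₂
  have hAB : A m = B 0 := hAm.trans hB0.symm
  exact ⟨m + n, splice A B m, hA.append hB hAB, splice_of_le m.zero_le,
    by rw [splice_of_ge hAB (m.le_add_right n), Nat.add_sub_cancel_left]⟩

theorem Isotypic.refl (X : V) : Isotypic X X := ⟨Anc.refl X, Anc.refl X⟩

theorem Isotypic.symm {X Y : V} (h : Isotypic X Y) : Isotypic Y X := ⟨h.2, h.1⟩

theorem Isotypic.trans {X Y Z : V} (h₁ : Isotypic X Y) (h₂ : Isotypic Y Z) : Isotypic X Z :=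
  ⟨h₁.1.trans h₂.1, h₂.2.trans h₁.2⟩

theorem IsFullEvol.append {S E : ℕ → V} {j ℓ : ℕ} {A X : V} (hS : IsFullEvol S j A)
    (hE : IsEvol E ℓ) (hE0 : E 0 = A) (hEℓ : E ℓ = X) : IsFullEvol (splice S E j) (j + ℓ) X := by
  have hSE : S j = E 0 := hS.2.2.trans hE0.symm
  refine ⟨hS.1.append hE hSE, ?_, ?_⟩
  · rw [splice_of_le j.zero_le]
    exact hS.2.1
  · rw [splice_of_ge hSE (j.le_add_right ℓ), Nat.add_sub_cancel_left, hEℓ]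

theorem height_le_of_isFullEvol {A : ℕ → V} {m : ℕ} {X : V} (h : IsFullEvol A m X) :
    height X ≤ m :=
  sInf_le ⟨m, rfl, A, h⟩

theorem exists_isFullEvol_of_height_lt_top {X : V} (h : height X < ⊤) :
    ∃ (m : ℕ) (A : ℕ → V), IsFullEvol A m X ∧ height X = m := by
  have hne : {n : ℕ∞ | ∃ m : ℕ, n = m ∧ ∃ A : ℕ → V, IsFullEvol A m X}.Nonempty := by
    by_contra hempty
    rw [Set.not_nonempty_iff_eq_empty] at hempty
    simp [height, hempty] at h
  obtain ⟨m, hm, A, hA⟩ := csInf_mem hne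
  exact ⟨m, A, hA, hm⟩

theorem Primitive.height_eq_zero {X : V} (h : Primitive X) : height X = 0 :=
  nonpos_iff_eq_zero.mp <| height_le_of_isFullEvol (A := fun _ => X) (m := 0)
    ⟨fun _ hk => absurd hk (Nat.not_lt_zero _), h, rfl⟩

theorem IsFullEvol.height_le {A : ℕ → V} {m : ℕ} {X : V} (h : IsFullEvol A m X) {k : ℕ}
    (hk : k ≤ m) : height (A k) ≤ k :=
  height_le_of_isFullEvol ⟨h.1.of_le hk, h.2.1, rfl⟩

theorem height_le_height_add_one {Y Z : V} (e : Nonempty (Z ⟶ Y)) :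
    height Z ≤ height Y + 1 := by
  rcases (le_top : height Y ≤ ⊤).lt_or_eq with hY | hY
  · obtain ⟨m, S, hS, hm⟩ := exists_isFullEvol_of_height_lt_top hY
    have hstep : IsEvol (fun i => if i = 0 then Y else Z) 1 := by
      intro k hk
      obtain rfl : k = 0 := by omega
      simpa using e
    calc height Z ≤ ((m + 1 : ℕ) : ℕ∞) := height_le_of_isFullEvol (hS.append hstep rfl rfl)
      _ = height Y + 1 := by rw [hm, Nat.cast_succ]
  · simp [hY]

theorem IsFullEvol.height_eq_index_of_short {A : ℕ → V} {m : ℕ} {X : V} (hA : IsFullEvol A m X)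
    (hX : height X = m) {k : ℕ} (hk : k ≤ m) : height (A k) = k := by
  -- a shorter full evolution for `A k`, continued by `A`, would be too short for `X`
  have hle := hA.height_le hk
  obtain ⟨j, S, hS, hj⟩ := exists_isFullEvol_of_height_lt_top (hle.trans_lt (ENat.natCast_lt_top k))
  have hfull : IsFullEvol (splice S (fun i => A (k + i)) j) (j + (m - k)) X :=
    hS.append (hA.1.shift (by omega)) rfl (by simp only [Nat.add_sub_cancel' hk, hA.2.2])
  have hmj : m ≤ j + (m - k) := by exact_mod_cast hX ▸ height_le_of_isFullEvol hfull
  have hjk : j ≤ k := by exact_mod_cast hj ▸ hle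
  rw [hj, show j = k by omega]

noncomputable def lastIndexOfHeightLE (B : ℕ → V) (n j : ℕ) : ℕ :=
  Nat.findGreatest (fun k => height (B k) ≤ j) n

theorem lastIndexOfHeightLE_le (B : ℕ → V) (n j : ℕ) : lastIndexOfHeightLE B n j ≤ n :=
  Nat.findGreatest_le n

theorem IsFullEvol.lastIndexOfHeightLE_eq {B : ℕ → V} {n : ℕ} {X : V} (hB : IsFullEvol B n X)
    {j : ℕ} (hj : height X ≤ j) : lastIndexOfHeightLE B n j = n :=
  Nat.findGreatest_eq (by rwa [hB.2.2])

theorem IsFullEvol.height_lastIndexOfHeightLE {B : ℕ → V} {n : ℕ} {X : V}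
    (hB : IsFullEvol B n X) {j : ℕ} (hj : j < height X) :
    lastIndexOfHeightLE B n j < n ∧ height (B (lastIndexOfHeightLE B n j)) = j ∧
      height (B (lastIndexOfHeightLE B n j + 1)) = j + 1 := by
  set r := lastIndexOfHeightLE B n j
  have hr : height (B r) ≤ j :=
    Nat.findGreatest_spec (P := fun k => height (B k) ≤ j) n.zero_le
      (by simp only [hB.2.1.height_eq_zero, zero_le])
  have hrn : r < n := by
    refine (lastIndexOfHeightLE_le B n j).lt_of_ne fun hrn => ?_
    rw [show r = n from hrn, hB.2.2] at hr
    exact hr.not_gt hj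
  have hr1 : j < height (B (r + 1)) :=
    not_le.mp (Nat.findGreatest_is_greatest r.lt_succ_self hrn)
  have hstep := height_le_height_add_one (hB.1 r hrn)
  have hr1' : height (B (r + 1)) = j + 1 :=
    le_antisymm (hstep.trans (add_le_add_left hr 1)) (Order.add_one_le_of_lt hr1)
  refine ⟨hrn, le_antisymm hr ?_, hr1'⟩
  rw [hr1'] at hstep
  exact (ENat.add_le_add_iff_right ENat.one_ne_top).mp hstep

theorem IsFullEvol.lastIndexOfHeightLE_lt_succ {B : ℕ → V} {n : ℕ} {X : V}
    (hB : IsFullEvol B n X) {j : ℕ} (hj : j < height X) :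
    lastIndexOfHeightLE B n j < lastIndexOfHeightLE B n (j + 1) := by
  obtain ⟨hrn, -, hr1⟩ := hB.height_lastIndexOfHeightLE hj
  exact Nat.lt_of_succ_le <| Nat.le_findGreatest hrn (by rw [hr1]; push_cast; rfl)

theorem IsEvol.critAnc {B : ℕ → V} {n r : ℕ} (hB : IsEvol B n) (hr : r < n)
    (h₁ : height (B r) < ⊤) (h₂ : height (B (r + 1)) = height (B r) + 1) :
    CritAnc (B r) (B n) :=
  ⟨h₁, n - r, fun i => B (r + i), by omega, hB.shift (by omega), rfl,
    by simp only [Nat.add_sub_cancel' hr.le], h₂⟩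

theorem IsFullEvol.isUniversalEvol {A : ℕ → V} {m : ℕ} {X : V} (hX : NormalVtx X)
    (hA : IsFullEvol A m X) (hm : height X = m) : IsUniversalEvol A m X := by
  refine ⟨hA, fun B n hB => ⟨?_, lastIndexOfHeightLE B n, ?_, ?_, ?_⟩⟩
  · exact_mod_cast hm ▸ height_le_of_isFullEvol hB
  · exact fun k hk => hB.lastIndexOfHeightLE_lt_succ (by rw [hm]; exact_mod_cast hk)
  · exact lastIndexOfHeightLE_le B n m
  · intro k hk
    rcases hk.lt_or_eq with hk | rfl
    · have hkX : (k : ℕ∞) < height X := by rw [hm]; exact_mod_cast hk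
      obtain ⟨hrn, hr, hr1⟩ := hB.height_lastIndexOfHeightLE hkX
      have hAk := hA.height_eq_index_of_short hm hk.le
      have hAk1 := hA.height_eq_index_of_short hm hk
      have critA : CritAnc (A k) X := hA.2.2 ▸ hA.1.critAnc hk
        (by simp [hAk]) (by rw [hAk1, hAk, Nat.cast_succ])
      have critB : CritAnc (B (lastIndexOfHeightLE B n k)) X := hB.2.2 ▸ hB.1.critAnc hrn
        (by simp [hr]) (by rw [hr1, hr])
      exact hX _ _ critA critB (hAk.trans hr.symm)
    · rw [hB.lastIndexOfHeightLE_eq hm.le, hA.2.2, hB.2.2]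
      exact Isotypic.refl X

theorem phylogenetic_of_normalVtx {X : V} (hX : NormalVtx X) (hfin : height X < ⊤) :
    Phylogenetic X := by
  obtain ⟨m, A, hA, hm⟩ := exists_isFullEvol_of_height_lt_top hfin
  exact ⟨A, m, hA.isUniversalEvol hX hm⟩

theorem Monotonous.height_le_of_anc (hmon : Monotonous V) {X Y : V} (h : Anc X Y) :
    height X ≤ height Y := by
  obtain ⟨m, A, hA, rfl, rfl⟩ := h
  suffices ∀ k ≤ m, height (A 0) ≤ height (A k) from this m le_rfl
  intro k hk
  induction k with
  | zero => exact le_rfl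
  | succ k ih => exact (ih (by omega)).trans (hmon _ _ (hA k hk))

theorem Monotonous.height_eq_of_isotypic (hmon : Monotonous V) {X Y : V} (h : Isotypic X Y) :
    height X = height Y :=
  le_antisymm (hmon.height_le_of_anc h.1) (hmon.height_le_of_anc h.2)

theorem Monotonous.eq_of_height_splice_eq (hmon : Monotonous V) {S E : ℕ → V} {j ℓ i : ℕ}
    {A : V} (hS : IsFullEvol S j A) (hA : height A = j) (hE : IsEvol E ℓ) (hE0 : E 0 = A)
    (hE1 : height (E 1) = j + 1) (hi : i ≤ j + ℓ) (h : height (splice S E j i) = j) :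
    i = j := by
  rcases lt_trichotomy i j with hij | rfl | hij
  · rw [splice_of_le hij.le, hS.height_eq_index_of_short hA hij.le] at h
    exact_mod_cast h
  · rfl
  · have hSE : S j = E 0 := hS.2.2.trans hE0.symm
    have hanc := (hS.1.append hE hSE).anc (show j + 1 ≤ i by omega) hi
    rw [splice_of_ge hSE (by omega), Nat.add_sub_cancel_left] at hanc
    have hle := hmon.height_le_of_anc hanc
    rw [hE1, h] at hle
    have : j + 1 ≤ j := by exact_mod_cast hle
    omega

theorem IsUniversalEvol.height_eq {U : ℕ → V} {m : ℕ} {X : V} (hU : IsUniversalEvol U m X) :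
    height X = m := by
  have hle := height_le_of_isFullEvol hU.1
  obtain ⟨n, B, hB, hn⟩ := exists_isFullEvol_of_height_lt_top (hle.trans_lt (ENat.natCast_lt_top m))
  exact le_antisymm hle (hn ▸ by exact_mod_cast (hU.2 B n hB).1)

theorem IsUniversalEvol.isotypic_of_critAnc (hmon : Monotonous V) {U : ℕ → V} {m : ℕ} {X A : V}
    (hU : IsUniversalEvol U m X) (hA : CritAnc A X) {j : ℕ} (hj : height A = j) :
    Isotypic (U j) A := by
  obtain ⟨-, ℓ, E, hℓ, hE, hE0, hEℓ, hE1⟩ := hA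
  obtain ⟨j', S, hS, hj'⟩ := exists_isFullEvol_of_height_lt_top (hj ▸ ENat.natCast_lt_top j)
  obtain rfl : j = j' := by exact_mod_cast hj.symm.trans hj'
  rw [hj] at hE1
  have hm := hU.height_eq
  have hjm : j < m := by
    have hle := hmon.height_le_of_anc (hE.anc (show 1 ≤ ℓ from hℓ) le_rfl)
    rw [hE1, hEℓ, hm] at hle
    exact_mod_cast hle
  obtain ⟨-, s, hs, hsm, hiso⟩ := hU.2 _ _ (hS.append hE hE0 hEℓ)
  have hsj_le : s j ≤ j + ℓ :=
    ((strictMonoOn_Iic_of_lt_succ hs).monotoneOn hjm.le (le_refl m) hjm.le).trans hsm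
  have hsj : s j = j := hmon.eq_of_height_splice_eq hS hj hE hE0 hE1 hsj_le
    (by rw [← hmon.height_eq_of_isotypic (hiso j hjm.le), hU.1.height_eq_index_of_short hm hjm.le])
  have hUj := hiso j hjm.le
  rwa [hsj, splice_of_le le_rfl, hS.2.2] at hUj

theorem Phylogenetic.height_lt_top {X : V} (hX : Phylogenetic X) : height X < ⊤ := by
  obtain ⟨U, m, hU⟩ := hX
  exact hU.height_eq ▸ ENat.natCast_lt_top m

theorem Phylogenetic.normalVtx (hmon : Monotonous V) {X : V} (hX : Phylogenetic X) :
    NormalVtx X := by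
  obtain ⟨U, m, hU⟩ := hX
  intro A A' hA hA' hAA'
  obtain ⟨j, hj⟩ := WithTop.ne_top_iff_exists.mp hA.1.ne
  exact (hU.isotypic_of_critAnc hmon hA hj.symm).symm.trans
    (hU.isotypic_of_critAnc hmon hA' (hAA' ▸ hj.symm))

theorem stmt_12 (hmon : Monotonous V) (X : V) :
    Phylogenetic X ↔ NormalVtx X ∧ height X < ⊤ :=
  ⟨fun hX => ⟨hX.normalVtx hmon, hX.height_lt_top⟩,
    fun ⟨hN, hfin⟩ => phylogenetic_of_normalVtx hN hfin⟩
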